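/- In the per-impression GSP setting, any feasible stable matching with assignment μ = {(1,1),...,(k,k)} satisfies p_j ≥ b_{j+1} for every slot j ≤ k. Consequently the matching with prices p_j = b_{j+1} is bidder-optimal among feasible stable matchings. -/

import Mathlib

/-- An auction instance: values `v`, maximum prices `m`, reserve prices `r`. -/
structure Auction (I J : Type) where
  v : I → J → ℝ
  m : I → J → ℝ
  r : I → J → ℝ

/-- A matching `(u, p, μ)` is feasible for an auction. -/
def Feasible {I J : Type} (A : Auction I J) (u : I → ℝ) (p : J → ℝ)
    (μ : I → Option J) : Prop :=
  (∀ i i' j, μ i = some j → μ i' = some j → i = i') ∧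
  (∀ i j, μ i = some j → A.r i j ≤ p j ∧ p j ≤ A.m i j ∧ u i + p j = A.v i j) ∧
  (∀ i, μ i = none → u i = 0) ∧
  (∀ j, (∀ i, μ i ≠ some j) → p j = 0) ∧
  (∀ i, 0 ≤ u i) ∧ (∀ j, 0 ≤ p j)

/-- Stability: every bidder-slot pair satisfies one of the three inequalities. -/
def Stable {I J : Type} (A : Auction I J) (u : I → ℝ) (p : J → ℝ) : Prop :=
  ∀ i j, u i + p j ≥ A.v i j ∨ p j ≥ A.m i j ∨ u i + A.r i j ≥ A.v i j

/-- A blocking pair violates all three stability inequalities. -/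
def Blocking {I J : Type} (A : Auction I J) (u : I → ℝ) (p : J → ℝ)
    (i : I) (j : J) : Prop :=
  u i + p j < A.v i j ∧ p j < A.m i j ∧ u i + A.r i j < A.v i j

/-- A bidder-optimal feasible stable matching. -/
def BidderOptimal {I J : Type} (A : Auction I J) (ustar : I → ℝ) (pstar : J → ℝ)
    (μstar : I → Option J) : Prop :=
  Feasible A ustar pstar μstar ∧ Stable A ustar pstar ∧
  ∀ u p μ, Feasible A u p μ → Stable A u p → ∀ i, u i ≤ ustar i

/-- The max-value encoding of per-impression GSP bidders:
`v_{i,j} = M(k-j)` (0-indexed slots), `m_{i,j} = b_i`, `r_{i,j} = 0`. -/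
def gspAuction (n k : ℕ) (b : Fin n → ℝ) (M : ℝ) : Auction (Fin n) (Fin k) :=
  ⟨fun _ j => M * ((k : ℝ) - (j : ℝ)), fun i _ => b i, fun _ _ => 0⟩

/-!
Under the diagonal assignment bidder `j+1` holds slot `j+1` or nothing, so its utility is at most
`M(k-j) - M`; stability of the pair (bidder `j+1`, slot `j`) then forces `p_j ≥ b_{j+1}`, since the
alternative `u_{j+1} + p_j ≥ M(k-j)` would give `p_j ≥ M > b_{j+1}`. The same blocking-pair argument
shows that every feasible stable matching is diagonal: it fills every slot, matches no bidder above
an unmatched one, and is assortative. So the price bound becomes the utility bound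
`u_i ≤ M(k-i) - b_{i+1}`, which the matching with prices `b_{j+1}` attains.
-/

open Finset

theorem le_mul_sub_of_lt {M : ℝ} (hM : 0 ≤ M) {j k : ℕ} (hj : j < k) :
    M ≤ M * ((k : ℝ) - j) := by
  have : (j : ℝ) + 1 ≤ k := by exact_mod_cast hj
  nlinarith

theorem Feasible.exists_unmatched {I J : Type} [Fintype I] [Fintype J] {A : Auction I J}
    {u : I → ℝ} {p : J → ℝ} {μ : I → Option J} (hF : Feasible A u p μ)
    (hcard : Fintype.card J < Fintype.card I) : ∃ i, μ i = none := by
  by_contra! hmatched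
  choose f hf using fun i => Option.ne_none_iff_exists'.mp (hmatched i)
  have hf_inj : Function.Injective f := fun i i' h => hF.1 i i' (f i) (hf i) (h ▸ hf i')
  exact hcard.not_ge (Fintype.card_le_of_injective f hf_inj)

def IsDiagonal {n k : ℕ} (μ : Fin n → Option (Fin k)) : Prop :=
  ∀ i : Fin n, ∀ h : (i : ℕ) < k, μ i = some ⟨i, h⟩

theorem IsDiagonal.eq_none {n k : ℕ} {μ : Fin n → Option (Fin k)} (hdiag : IsDiagonal μ)
    (hinj : ∀ i i' j, μ i = some j → μ i' = some j → i = i') (hnk : k ≤ n) {i : Fin n}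
    (hi : k ≤ (i : ℕ)) : μ i = none := by
  rw [Option.eq_none_iff_forall_ne_some]
  intro j hj
  have := hinj i (Fin.castLE hnk j) j hj (hdiag (Fin.castLE hnk j) j.isLt)
  have := congrArg Fin.val this
  simp only [Fin.val_castLE] at this
  omega

def diagonalAssignment (n k : ℕ) : Fin n → Option (Fin k) :=
  fun i => if h : (i : ℕ) < k then some ⟨i, h⟩ else none

@[simp]
theorem diagonalAssignment_eq_some_iff {n k : ℕ} {i : Fin n} {j : Fin k} :
    diagonalAssignment n k i = some j ↔ (i : ℕ) = j := by
  unfold diagonalAssignment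
  split_ifs with h
  · simp [Fin.ext_iff]
  · simp only [false_iff]
    omega

@[simp]
theorem diagonalAssignment_eq_none_iff {n k : ℕ} {i : Fin n} :
    diagonalAssignment n k i = none ↔ k ≤ (i : ℕ) := by
  unfold diagonalAssignment
  split_ifs with h <;> simp <;> omega

section GSP

variable {n k : ℕ} {b : Fin n → ℝ} {M : ℝ} {u : Fin n → ℝ} {p : Fin k → ℝ}
  {μ : Fin n → Option (Fin k)}

@[simp] theorem gspAuction_v (i : Fin n) (j : Fin k) :
    (gspAuction n k b M).v i j = M * ((k : ℝ) - (j : ℕ)) := rfl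

@[simp] theorem gspAuction_r (i : Fin n) (j : Fin k) : (gspAuction n k b M).r i j = 0 := rfl

def nextBidder (hnk : k < n) (j : Fin k) : Fin n := ⟨j + 1, by omega⟩

@[simp] theorem nextBidder_val (hnk : k < n) (j : Fin k) : (nextBidder hnk j : ℕ) = j + 1 := rfl

def gspPrices (hnk : k < n) (b : Fin n → ℝ) : Fin k → ℝ := fun j => b (nextBidder hnk j)

def gspUtilities (hnk : k < n) (b : Fin n → ℝ) (M : ℝ) : Fin n → ℝ :=
  fun i => if h : (i : ℕ) < k then M * ((k : ℝ) - (i : ℕ)) - b (nextBidder hnk ⟨i, h⟩) else 0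

theorem gsp_stable_cases (hp : ∀ j, 0 ≤ p j) (hS : Stable (gspAuction n k b M) u p)
    (i : Fin n) (j : Fin k) : b i ≤ p j ∨ M * ((k : ℝ) - (j : ℕ)) ≤ u i + p j := by
  rcases hS i j with h | h | h
  · exact Or.inr h
  · exact Or.inl h
  · simp only [gspAuction_v, gspAuction_r, add_zero] at h
    exact Or.inr (by linarith [hp j])

theorem gsp_exists_bidder_of_slot (hnk : k < n) (hbpos : ∀ i, 0 < b i) (hM : 0 < M)
    (hF : Feasible (gspAuction n k b M) u p μ) (hS : Stable (gspAuction n k b M) u p)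
    (j : Fin k) : ∃ i, μ i = some j := by
  by_contra! hfree
  obtain ⟨t, ht⟩ := hF.exists_unmatched (by simpa using hnk)
  obtain ⟨-, -, hnone, hfree_price, -, hp0⟩ := hF
  have hpj : p j = 0 := hfree_price j hfree
  have hut : u t = 0 := hnone t ht
  rcases gsp_stable_cases hp0 hS t j with h | h
  · linarith [hbpos t]
  · linarith [le_mul_sub_of_lt hM.le j.isLt]

theorem gsp_lt_of_unmatched (hb : StrictAnti b) (hbM : ∀ i, b i < M)
    (hF : Feasible (gspAuction n k b M) u p μ) (hS : Stable (gspAuction n k b M) u p)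
    {i i' : Fin n} {j : Fin k} (hi : μ i = none) (hi' : μ i' = some j) : i' < i := by
  obtain ⟨-, hmatch, hnone, -, -, hp0⟩ := hF
  have hpj : p j ≤ b i' := (hmatch i' j hi').2.1
  have hM : 0 ≤ M := (hp0 j).trans (hpj.trans (hbM i').le)
  rcases gsp_stable_cases hp0 hS i j with h | h
  · refine lt_of_le_of_ne (hb.le_iff_ge.mp (h.trans hpj)) ?_
    rintro rfl
    simp [hi] at hi'
  · linarith [hbM i', le_mul_sub_of_lt hM j.isLt, hnone i hi]

theorem gsp_matched_of_lt (hnk : k < n) (hb : StrictAnti b) (hbpos : ∀ i, 0 < b i)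
    (hbM : ∀ i, b i < M) (hF : Feasible (gspAuction n k b M) u p μ)
    (hS : Stable (gspAuction n k b M) u p) {i : Fin n} (hi : (i : ℕ) < k) :
    ∃ j, μ i = some j := by
  rw [← Option.ne_none_iff_exists']
  intro hnone
  choose σ hσ using gsp_exists_bidder_of_slot hnk hbpos ((hbpos i).trans (hbM i)) hF hS
  have hσ_inj : Function.Injective σ := fun j j' h =>
    Option.some_injective _ ((hσ j).symm.trans (h ▸ hσ j'))
  have hcard := card_le_card_of_injOn σ (s := univ) (t := Iio i)
    (fun j _ => mem_Iio.mpr (gsp_lt_of_unmatched hb hbM hF hS hnone (hσ j))) hσ_inj.injOn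
  simp only [card_univ, Fintype.card_fin, Fin.card_Iio] at hcard
  omega

theorem gsp_slot_strictMono (hb : StrictAnti b) (hbM : ∀ i, b i < M)
    (hF : Feasible (gspAuction n k b M) u p μ) (hS : Stable (gspAuction n k b M) u p)
    {i i' : Fin n} {j j' : Fin k} (hii' : i < i') (hj : μ i = some j) (hj' : μ i' = some j') :
    j < j' := by
  obtain ⟨hinj, hmatch, -, -, -, hp0⟩ := hF
  by_contra! hle
  rcases hle.eq_or_lt with heq | hlt
  · exact hii'.ne (hinj i i' j hj (heq ▸ hj'))
  have hpj' : p j' ≤ b i' := (hmatch i' j' hj').2.1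
  have hui : u i + p j = M * ((k : ℝ) - (j : ℕ)) := (hmatch i j hj).2.2
  rcases gsp_stable_cases hp0 hS i j' with h | h
  · linarith [hb hii']
  · have hM : 0 ≤ M := (hp0 j').trans (hpj'.trans (hbM i').le)
    have hgap : M ≤ M * (((j : ℕ) : ℝ) - (j' : ℕ)) := by
      simpa using le_mul_sub_of_lt hM (Fin.lt_def.mp hlt)
    nlinarith [hbM i', hp0 j]

theorem gsp_isDiagonal (hnk : k < n) (hb : StrictAnti b) (hbpos : ∀ i, 0 < b i)
    (hbM : ∀ i, b i < M) (hF : Feasible (gspAuction n k b M) u p μ)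
    (hS : Stable (gspAuction n k b M) u p) : IsDiagonal μ := by
  intro i hi
  choose τ hτ using fun i' : Fin k =>
    gsp_matched_of_lt hnk hb hbpos hbM hF hS (i := Fin.castLE hnk.le i') i'.isLt
  have hτ_mono : StrictMono τ := fun a a' h => gsp_slot_strictMono hb hbM hF hS h (hτ a) (hτ a')
  simpa [hτ_mono.apply_eq] using hτ ⟨i, hi⟩

theorem gsp_nextBid_le_price (hnk : k < n) (hbM : ∀ i, b i < M)
    (hF : Feasible (gspAuction n k b M) u p μ) (hS : Stable (gspAuction n k b M) u p)
    (hdiag : IsDiagonal μ) (j : Fin k) : b (nextBidder hnk j) ≤ p j := by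
  obtain ⟨hinj, hmatch, hnone, -, -, hp0⟩ := hF
  have hM : 0 ≤ M :=
    (hp0 j).trans ((hmatch _ j (hdiag (Fin.castLE hnk.le j) j.isLt)).2.1.trans (hbM _).le)
  have hj : ((j : ℕ) : ℝ) + 1 ≤ k := by exact_mod_cast j.isLt
  have hu : u (nextBidder hnk j) + M ≤ M * ((k : ℝ) - (j : ℕ)) := by
    by_cases hnext : (j : ℕ) + 1 < k
    · have hval := (hmatch _ _ (hdiag (nextBidder hnk j) hnext)).2.2
      simp only [gspAuction_v, nextBidder_val, Nat.cast_add, Nat.cast_one] at hval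
      nlinarith [hp0 ⟨(j : ℕ) + 1, hnext⟩]
    · have hk : ((j : ℕ) : ℝ) + 1 = k := by exact_mod_cast (by omega : (j : ℕ) + 1 = k)
      have hzero := hnone _ (hdiag.eq_none hinj hnk.le (i := nextBidder hnk j) (by
        simp only [nextBidder_val]; omega))
      rw [hzero, ← hk]
      linarith [show M * (((j : ℕ) : ℝ) + 1 - (j : ℕ)) = M by ring]
  rcases gsp_stable_cases hp0 hS (nextBidder hnk j) j with h | h
  · exact h
  · linarith [hbM (nextBidder hnk j)]

theorem gsp_utility_le_gspUtilities (hnk : k < n) (hb : StrictAnti b) (hbpos : ∀ i, 0 < b i)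
    (hbM : ∀ i, b i < M) (hF : Feasible (gspAuction n k b M) u p μ)
    (hS : Stable (gspAuction n k b M) u p) (i : Fin n) : u i ≤ gspUtilities hnk b M i := by
  have hdiag := gsp_isDiagonal hnk hb hbpos hbM hF hS
  have hprice := gsp_nextBid_le_price hnk hbM hF hS hdiag
  obtain ⟨hinj, hmatch, hnone, -⟩ := hF
  unfold gspUtilities
  split_ifs with hi
  · have hval := (hmatch i _ (hdiag i hi)).2.2
    simp only [gspAuction_v] at hval
    linarith [hprice ⟨i, hi⟩]
  · exact (hnone i (hdiag.eq_none hinj hnk.le (not_lt.mp hi))).le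

theorem feasible_gspOutcome (hnk : k < n) (hb : StrictAnti b) (hbpos : ∀ i, 0 < b i)
    (hbM : ∀ i, b i < M) :
    Feasible (gspAuction n k b M) (gspUtilities hnk b M) (gspPrices hnk b)
      (diagonalAssignment n k) := by
  refine ⟨?_, ?_, ?_, ?_, ?_, fun j => (hbpos _).le⟩
  · intro i i' j hi hi'
    rw [diagonalAssignment_eq_some_iff] at hi hi'
    exact Fin.ext (hi.trans hi'.symm)
  · intro i j hij
    rw [diagonalAssignment_eq_some_iff] at hij
    have hi : (i : ℕ) < k := hij ▸ j.isLt
    have hnext : nextBidder hnk ⟨i, hi⟩ = nextBidder hnk j := Fin.ext (by simp [hij])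
    refine ⟨(hbpos _).le, hb.antitone (by simp [Fin.le_def, hij]), ?_⟩
    simp only [gspUtilities, dif_pos hi]
    rw [hnext]
    simp only [gspPrices, gspAuction_v, hij]
    ring
  · intro i hi
    rw [diagonalAssignment_eq_none_iff] at hi
    simp [gspUtilities, not_lt.mpr hi]
  · intro j hj
    exact (hj (Fin.castLE hnk.le j) (diagonalAssignment_eq_some_iff.mpr rfl)).elim
  · intro i
    unfold gspUtilities
    split_ifs with hi
    · linarith [le_mul_sub_of_lt ((hbpos i).trans (hbM i)).le hi, hbM (nextBidder hnk ⟨i, hi⟩)]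
    · exact le_rfl

theorem stable_gspOutcome (hnk : k < n) (hb : StrictAnti b) (hbpos : ∀ i, 0 < b i)
    (hbM : ∀ i, b i < M) :
    Stable (gspAuction n k b M) (gspUtilities hnk b M) (gspPrices hnk b) := by
  intro i j
  by_cases hji : (j : ℕ) < i
  · exact Or.inr (Or.inl (hb.antitone (show nextBidder hnk j ≤ i from hji)))
  left
  have hi : (i : ℕ) < k := by omega
  simp only [gspAuction_v, gspUtilities, gspPrices, dif_pos hi, ge_iff_le]
  suffices b (nextBidder hnk ⟨i, hi⟩) - b (nextBidder hnk j) ≤ M * (((j : ℕ) : ℝ) - (i : ℕ)) by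
    linarith
  rcases (not_lt.mp hji).eq_or_lt with heq | hlt
  · simp [heq]
  · linarith [le_mul_sub_of_lt ((hbpos i).trans (hbM i)).le hlt, hbM (nextBidder hnk ⟨i, hi⟩),
      hbpos (nextBidder hnk j)]

end GSP

/-- any feasible stable GSP matching with the diagonal assignment
has `p_j ≥ b_{j+1}`, and consequently the matching with prices `p_j = b_{j+1}`
is bidder-optimal. -/
theorem gsp_prices_and_optimality (n k : ℕ) (hnk : k < n)
    (b : Fin n → ℝ) (hb : StrictAnti b) (hbpos : ∀ i, 0 < b i)
    (M : ℝ) (hM : b ⟨0, Nat.lt_of_le_of_lt (Nat.zero_le k) hnk⟩ < M) :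
    (∀ (u : Fin n → ℝ) (p : Fin k → ℝ) (μ : Fin n → Option (Fin k)),
        Feasible (gspAuction n k b M) u p μ →
        Stable (gspAuction n k b M) u p →
        (∀ i : Fin n, ∀ h : (i : ℕ) < k, μ i = some ⟨(i : ℕ), h⟩) →
        ∀ j : Fin k, p j ≥ b ⟨(j : ℕ) + 1, by have := j.isLt; omega⟩) ∧
    BidderOptimal (gspAuction n k b M)
      (fun i => if h : (i : ℕ) < k then
          M * ((k : ℝ) - (i : ℝ)) - b ⟨(i : ℕ) + 1, by omega⟩ else 0)
      (fun j => b ⟨(j : ℕ) + 1, by have := j.isLt; omega⟩)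
      (fun i => if h : (i : ℕ) < k then some ⟨(i : ℕ), h⟩ else none) := by
  have hbM : ∀ i, b i < M := fun i => (hb.antitone (Nat.zero_le _)).trans_lt hM
  exact ⟨fun u p μ hF hS hdiag j => gsp_nextBid_le_price hnk hbM hF hS hdiag j,
    feasible_gspOutcome hnk hb hbpos hbM, stable_gspOutcome hnk hb hbpos hbM,
    fun u p μ hF hS i => gsp_utility_le_gspUtilities hnk hb hbpos hbM hF hS i⟩
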